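/- In the group algebra ℤ[D_n] (n ≥ 4), the product Φ_2 Φ_3 ⋯ Φ_n equals the sum of all elements of D_n, where Φ_j = 1 + ∑_{−j ≤ i < j} t_{ij}. -/

import Mathlib

/-- The signed transposition `t_{ij}` of `ℤ`, exchanging `i ↔ j` and `-i ↔ -j`
(when `i = -j` this is the sign change negating `j`). -/
def bt (i j : ℤ) : Equiv.Perm ℤ :=
  if i = -j then Equiv.swap i j else Equiv.swap i j * Equiv.swap (-i) (-j)

/-- The type D transposition `t_{ij}`: for `i ≠ -j` it is the signed transposition
exchanging `i ↔ j` and `-i ↔ -j`; for `i = -j` it is the double sign change negating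
the letters `1` and `j` (so `t_{-1,1} = 1`). -/
def dt (i j : ℤ) : Equiv.Perm ℤ :=
  if i = -j then Equiv.swap (-1 : ℤ) 1 * Equiv.swap (-j) j else bt i j

/-- `w` is a signed permutation in the hyperoctahedral group `B_n`. -/
def IsSignedPerm (n : ℕ) (w : Equiv.Perm ℤ) : Prop :=
  (∀ x : ℤ, w (-x) = -w x) ∧ ∀ x : ℤ, (n : ℤ) < |x| → w x = x

/-- `N(w)`: the number of negative entries among `w(1), …, w(n)`. -/
noncomputable def NB (n : ℕ) (w : Equiv.Perm ℤ) : ℕ :=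
  ((Finset.Icc (1 : ℤ) (n : ℤ)).filter fun i => w i < 0).card

/-- The Coxeter group `D_n`: signed permutations with an even number of negative
entries. -/
def DSet (n : ℕ) : Set (Equiv.Perm ℤ) :=
  {w | IsSignedPerm n w ∧ Even (NB n w)}

/-- `Φ_j = 1 + ∑_{-j ≤ i < j, i ≠ 0} t_{ij} ∈ ℤ[D_n]`. -/
noncomputable def phiD (j : ℕ) : MonoidAlgebra ℤ (Equiv.Perm ℤ) :=
  1 + ∑ i ∈ (Finset.Icc (-(j : ℤ)) ((j : ℤ) - 1)).erase 0,
      MonoidAlgebra.of ℤ (Equiv.Perm ℤ) (dt i (j : ℤ))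

/-!
For `j ≥ 2` the stabiliser of the letter `j` in `D_j` is `D_{j-1}`, and `1` together with the
`t_{ij}` (`-j ≤ i < j`, `i ≠ 0`) is a transversal of its right cosets: each of these is an
involution of `D_j`, and they send `j` to pairwise different letters (`t_{ij} j = i`). So every
`w ∈ D_j` factors uniquely as `w = u t` with `u ∈ D_{j-1}` and `t j = w⁻¹ j`, which gives
`∑ D_j = (∑ D_{j-1}) Φ_j`; the product telescopes down to `D_1 = {1}`. Parity of the number of
negative entries is handled through the multiplicative character `w ↦ ∏_{k ≤ n} sign (w k)`.
-/

open Finset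

namespace IsSignedPerm

variable {n : ℕ} {u v w : Equiv.Perm ℤ}

lemma one (n : ℕ) : IsSignedPerm n 1 := ⟨fun _ => rfl, fun _ _ => rfl⟩

lemma mul (hu : IsSignedPerm n u) (hv : IsSignedPerm n v) : IsSignedPerm n (u * v) :=
  ⟨fun x => by rw [Equiv.Perm.mul_apply, Equiv.Perm.mul_apply, hv.1, hu.1],
    fun x hx => by rw [Equiv.Perm.mul_apply, hv.2 x hx, hu.2 x hx]⟩

lemma inv (hw : IsSignedPerm n w) : IsSignedPerm n w⁻¹ :=
  ⟨fun x => by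
      rw [Equiv.Perm.inv_eq_iff_eq, hw.1, Equiv.Perm.coe_inv, Equiv.apply_symm_apply],
    fun x hx => by rw [Equiv.Perm.inv_eq_iff_eq, hw.2 x hx]⟩

lemma mono {m : ℕ} (h : n ≤ m) (hw : IsSignedPerm n w) : IsSignedPerm m w :=
  ⟨hw.1, fun x hx => hw.2 x (lt_of_le_of_lt (by exact_mod_cast h) hx)⟩

lemma apply_natCast_succ (hw : IsSignedPerm n w) : w (n + 1 : ℕ) = (n + 1 : ℕ) :=
  hw.2 _ (by rw [abs_of_pos (by positivity)]; omega)

lemma of_succ (hw : IsSignedPerm (n + 1) w) (hfix : w (n + 1 : ℕ) = (n + 1 : ℕ)) :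
    IsSignedPerm n w := by
  refine ⟨hw.1, fun x hx => ?_⟩
  rcases (show x = n + 1 ∨ x = -(n + 1) ∨ ((n + 1 : ℕ) : ℤ) < |x| by
    rcases abs_choice x with h | h <;> push_cast <;> omega) with rfl | rfl | hlt
  · exact_mod_cast hfix
  · rw [hw.1]; exact_mod_cast congrArg Neg.neg hfix
  · exact hw.2 x hlt

lemma map_zero (hw : IsSignedPerm n w) : w 0 = 0 := by
  have := hw.1 0
  rw [neg_zero] at this
  omega

lemma apply_ne_zero (hw : IsSignedPerm n w) {x : ℤ} (hx : x ≠ 0) : w x ≠ 0 :=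
  fun h => hx (w.injective (h.trans hw.map_zero.symm))

lemma apply_eq_sign_mul (hw : IsSignedPerm n w) (x : ℤ) : w x = x.sign * w |x| := by
  rcases lt_trichotomy x 0 with hx | rfl | hx
  · rw [Int.sign_eq_neg_one_of_neg hx, abs_of_neg hx, hw.1, neg_one_mul, neg_neg]
  · rw [Int.sign_zero, zero_mul, hw.map_zero]
  · rw [Int.sign_eq_one_of_pos hx, abs_of_pos hx, one_mul]

lemma abs_apply_abs (hw : IsSignedPerm n w) (x : ℤ) : |w (|x|)| = |w x| := by
  rcases abs_choice x with h | h <;> rw [h]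
  rw [hw.1, abs_neg]

lemma abs_apply_mem (hw : IsSignedPerm n w) {k : ℤ} (hk : k ∈ Icc (1 : ℤ) n) :
    |w k| ∈ Icc (1 : ℤ) n := by
  rw [mem_Icc] at hk ⊢
  refine ⟨Int.one_le_abs (hw.apply_ne_zero (by omega)), not_lt.mp fun hlt => ?_⟩
  have hk' : w k = k := w.injective (hw.2 _ hlt)
  rw [hk', abs_of_pos (by omega)] at hlt
  omega

end IsSignedPerm

noncomputable def negSign (n : ℕ) (w : Equiv.Perm ℤ) : ℤ :=
  ∏ k ∈ Icc (1 : ℤ) n, (w k).sign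

section negSign

variable {n : ℕ} {u v w : Equiv.Perm ℤ}

lemma negSign_mul (hu : IsSignedPerm n u) (hv : IsSignedPerm n v) :
    negSign n (u * v) = negSign n u * negSign n v := by
  have hsplit : ∀ k, ((u * v) k).sign = (v k).sign * (u (|v k|)).sign := fun k => by
    rw [Equiv.Perm.mul_apply, hu.apply_eq_sign_mul, Int.sign_mul, Int.sign_sign]
  -- `k ↦ |v k|` permutes `{1, …, n}`
  have hreindex : ∏ k ∈ Icc (1 : ℤ) n, (u (|v k|)).sign = negSign n u := by
    refine prod_nbij' (fun k => |v k|) (fun k => |v⁻¹ k|) (fun k hk => hv.abs_apply_mem hk)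
      (fun k hk => hv.inv.abs_apply_mem hk) (fun k hk => ?_) (fun k hk => ?_) fun _ _ => rfl
    · rw [hv.inv.abs_apply_abs, Equiv.Perm.coe_inv, Equiv.symm_apply_apply, abs_of_pos (by grind)]
    · rw [hv.abs_apply_abs, Equiv.Perm.coe_inv, Equiv.apply_symm_apply, abs_of_pos (by grind)]
  rw [negSign, prod_congr rfl fun k _ => hsplit k, prod_mul_distrib, hreindex, mul_comm]
  rfl

lemma IsSignedPerm.negSign_eq_neg_one_pow (hw : IsSignedPerm n w) :
    negSign n w = (-1) ^ NB n w := by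
  have hsign : ∀ k ∈ Icc (1 : ℤ) n, (w k).sign = if w k < 0 then -1 else 1 := fun k hk => by
    have := hw.apply_ne_zero (show k ≠ 0 by grind)
    split_ifs with h
    · exact Int.sign_eq_neg_one_of_neg h
    · exact Int.sign_eq_one_of_pos (by omega)
  rw [negSign, prod_congr rfl hsign, prod_ite, prod_const, prod_const_one, mul_one, NB]

lemma IsSignedPerm.negSign_succ (hw : IsSignedPerm n w) : negSign (n + 1) w = negSign n w := by
  rw [negSign, negSign, Nat.cast_succ, ← insert_Icc_right_eq_Icc_add_one (by omega),
    prod_insert (by simp), ← Nat.cast_succ, hw.apply_natCast_succ,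
    Int.sign_eq_one_of_pos (by positivity), one_mul]

end negSign

section DSet

variable {n : ℕ} {u v w : Equiv.Perm ℤ}

lemma mem_DSet_iff : w ∈ DSet n ↔ IsSignedPerm n w ∧ negSign n w = 1 :=
  and_congr_right fun hw => by
    rw [hw.negSign_eq_neg_one_pow, neg_one_pow_eq_one_iff_even (by decide)]

lemma one_mem_DSet (n : ℕ) : 1 ∈ DSet n :=
  mem_DSet_iff.mpr ⟨.one n, prod_eq_one fun k hk => by
    rw [Equiv.Perm.one_apply]; exact Int.sign_eq_one_of_pos (by grind)⟩

lemma mul_mem_DSet (hu : u ∈ DSet n) (hv : v ∈ DSet n) : u * v ∈ DSet n := by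
  rw [mem_DSet_iff] at *
  exact ⟨hu.1.mul hv.1, by rw [negSign_mul hu.1 hv.1, hu.2, hv.2, one_mul]⟩

lemma mem_DSet_succ (hw : w ∈ DSet n) : w ∈ DSet (n + 1) := by
  rw [mem_DSet_iff] at *
  exact ⟨hw.1.mono n.le_succ, by rw [hw.1.negSign_succ, hw.2]⟩

lemma mem_DSet_of_succ (hw : w ∈ DSet (n + 1)) (hfix : w (n + 1 : ℕ) = (n + 1 : ℕ)) :
    w ∈ DSet n := by
  rw [mem_DSet_iff] at *
  have hw' : IsSignedPerm n w := hw.1.of_succ hfix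
  exact ⟨hw', by rw [← hw'.negSign_succ, hw.2]⟩

lemma eq_one_of_mem_DSet_zero (hw : w ∈ DSet 0) : w = 1 := by
  ext x
  rcases eq_or_ne x 0 with rfl | hx
  · exact hw.1.map_zero
  · exact hw.1.2 x (by simpa using hx)

lemma eq_one_of_mem_DSet_one (hw : w ∈ DSet 1) : w = 1 := by
  obtain ⟨hsigned, hsign⟩ := mem_DSet_iff.mp hw
  have hpos : 0 < w 1 := by simpa [negSign] using hsign
  have hle : |w 1| ≤ 1 := (mem_Icc.mp (hsigned.abs_apply_mem (by simp))).2
  refine eq_one_of_mem_DSet_zero (mem_DSet_of_succ hw ?_)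
  rw [abs_of_pos hpos] at hle
  push_cast
  omega

end DSet

noncomputable def signedLetters (j : ℕ) : Finset ℤ := (Icc (-(j : ℤ)) j).erase 0

/-- The representative, with `x = w⁻¹ j`, of the coset `D_{j-1} w` of `D_j`. -/
def cosetRep (j : ℕ) (x : ℤ) : Equiv.Perm ℤ := if x = j then 1 else dt x j

section cosetRep

variable {j : ℕ} {x : ℤ}

lemma mem_signedLetters : x ∈ signedLetters j ↔ x ≠ 0 ∧ -(j : ℤ) ≤ x ∧ x ≤ j := by
  rw [signedLetters, mem_erase, mem_Icc]

lemma cosetRep_apply (hj : 2 ≤ j) (hx : x ∈ signedLetters j) (y : ℤ) :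
    cosetRep j x y =
      if x = -(j : ℤ) then
        if y = 1 then -1 else if y = -1 then 1
        else if y = j then -(j : ℤ) else if y = -(j : ℤ) then (j : ℤ) else y
      else
        if y = x then (j : ℤ) else if y = j then x
        else if y = -x then -(j : ℤ) else if y = -(j : ℤ) then -x else y := by
  have := mem_signedLetters.mp hx
  unfold cosetRep dt bt
  grind [Equiv.Perm.mul_apply, Equiv.Perm.one_apply]

lemma cosetRep_apply_self (hj : 2 ≤ j) (hx : x ∈ signedLetters j) : cosetRep j x j = x := by
  have := mem_signedLetters.mp hx
  rw [cosetRep_apply hj hx]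
  grind

lemma cosetRep_mul_self (hj : 2 ≤ j) (hx : x ∈ signedLetters j) :
    cosetRep j x * cosetRep j x = 1 := by
  have := mem_signedLetters.mp hx
  ext y
  rw [Equiv.Perm.mul_apply, Equiv.Perm.one_apply, cosetRep_apply hj hx, cosetRep_apply hj hx]
  grind

lemma isSignedPerm_cosetRep (hj : 2 ≤ j) (hx : x ∈ signedLetters j) :
    IsSignedPerm j (cosetRep j x) := by
  have := mem_signedLetters.mp hx
  refine ⟨fun y => ?_, fun y hy => ?_⟩
  · rw [cosetRep_apply hj hx, cosetRep_apply hj hx]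
    grind
  · rw [cosetRep_apply hj hx]
    grind

lemma even_NB_cosetRep (hj : 2 ≤ j) (hx : x ∈ signedLetters j) :
    Even (NB j (cosetRep j x)) := by
  have := mem_signedLetters.mp hx
  have hneg : (Icc (1 : ℤ) j).filter (cosetRep j x · < 0) =
      if 0 < x then ∅ else {if x = -j then 1 else -x, (j : ℤ)} := by
    ext y
    simp only [mem_filter, mem_Icc, cosetRep_apply hj hx]
    split_ifs <;> simp <;> omega
  rw [NB, hneg]
  split_ifs
  · exact Even.zero
  all_goals rw [card_pair (by omega)]; exact even_two

lemma cosetRep_one (hx : x ∈ signedLetters 1) : cosetRep 1 x = 1 := by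
  obtain rfl | rfl : x = 1 ∨ x = -1 := by grind [mem_signedLetters]
  · exact if_pos rfl
  · rw [cosetRep, if_neg (by decide), dt, if_pos (by simp)]
    exact Equiv.swap_mul_self _ _

lemma cosetRep_mem_DSet (hj : 1 ≤ j) (hx : x ∈ signedLetters j) : cosetRep j x ∈ DSet j := by
  obtain rfl | hj : j = 1 ∨ 2 ≤ j := by omega
  · rw [cosetRep_one hx]
    exact one_mem_DSet 1
  · exact ⟨isSignedPerm_cosetRep hj hx, even_NB_cosetRep hj hx⟩

lemma phiD_eq_sum_cosetRep (hj : 1 ≤ j) :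
    phiD j = ∑ x ∈ signedLetters j, MonoidAlgebra.of ℤ (Equiv.Perm ℤ) (cosetRep j x) := by
  have hletters : signedLetters j = insert (j : ℤ) ((Icc (-(j : ℤ)) (j - 1)).erase 0) := by
    ext y
    simp only [signedLetters, mem_erase, mem_Icc, mem_insert]
    omega
  rw [hletters, sum_insert (by simp), cosetRep, if_pos rfl, map_one, phiD]
  refine congrArg _ (sum_congr rfl fun y hy => ?_)
  rw [cosetRep, if_neg (by simp at hy; omega)]

end cosetRep

section dFinset

open scoped Classical

noncomputable def dFinset : ℕ → Finset (Equiv.Perm ℤ)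
  | 0 => {1}
  | m + 1 => (dFinset m ×ˢ signedLetters (m + 1)).image fun p => p.1 * cosetRep (m + 1) p.2

variable {m : ℕ} {w : Equiv.Perm ℤ}

lemma mem_dFinset_succ :
    w ∈ dFinset (m + 1) ↔
      ∃ u ∈ dFinset m, ∃ x ∈ signedLetters (m + 1), u * cosetRep (m + 1) x = w := by
  simp only [dFinset, mem_image, mem_product, Prod.exists, and_assoc, exists_and_left]

lemma dFinset_one : dFinset 1 = {1} := by
  have h1 : (1 : ℤ) ∈ signedLetters 1 := by simp [mem_signedLetters]
  ext w
  rw [mem_dFinset_succ, mem_singleton]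
  constructor
  · rintro ⟨u, hu, x, hx, rfl⟩
    rw [mem_singleton.mp hu, cosetRep_one hx, one_mul]
  · rintro rfl
    exact ⟨1, mem_singleton_self _, 1, h1, by rw [cosetRep_one h1, one_mul]⟩

lemma mem_DSet_of_mem_dFinset (hw : w ∈ dFinset m) : w ∈ DSet m := by
  induction m generalizing w with
  | zero => exact (mem_singleton.mp hw) ▸ one_mem_DSet 0
  | succ m ih =>
    obtain ⟨u, hu, x, hx, rfl⟩ := mem_dFinset_succ.mp hw
    exact mul_mem_DSet (mem_DSet_succ (ih hu)) (cosetRep_mem_DSet m.succ_pos hx)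

lemma inv_mul_cosetRep_apply {j : ℕ} (hj : 2 ≤ j) {u : Equiv.Perm ℤ} {x : ℤ}
    (hx : x ∈ signedLetters j) (hu : u j = j) : (u * cosetRep j x)⁻¹ j = x := by
  rw [mul_inv_rev, Equiv.Perm.mul_apply, Equiv.Perm.inv_eq_iff_eq.mpr hu.symm,
    inv_eq_of_mul_eq_one_right (cosetRep_mul_self hj hx), cosetRep_apply_self hj hx]

lemma exists_mul_cosetRep (hw : w ∈ DSet (m + 2)) :
    ∃ u ∈ DSet (m + 1), ∃ x ∈ signedLetters (m + 2), u * cosetRep (m + 2) x = w := by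
  obtain ⟨x, hxdef⟩ : ∃ x, w⁻¹ (m + 2 : ℕ) = x := ⟨_, rfl⟩
  have hx : x ∈ signedLetters (m + 2) := by
    have := mem_Icc.mp (hw.1.inv.abs_apply_mem (k := (m + 2 : ℕ)) (by rw [mem_Icc]; omega))
    rw [hxdef] at this
    rw [mem_signedLetters]
    rcases abs_choice x with h | h <;> omega
  have hux : w * cosetRep (m + 2) x ∈ DSet (m + 2) :=
    mul_mem_DSet hw (cosetRep_mem_DSet (by omega) hx)
  refine ⟨_, mem_DSet_of_succ hux ?_, x, hx, ?_⟩
  · rw [Equiv.Perm.mul_apply, cosetRep_apply_self (by omega) hx, ← hxdef, Equiv.Perm.coe_inv,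
      Equiv.apply_symm_apply]
  · rw [mul_assoc, cosetRep_mul_self (by omega) hx, mul_one]

lemma mem_dFinset_of_mem_DSet (hw : w ∈ DSet m) : w ∈ dFinset m := by
  induction m generalizing w with
  | zero => exact mem_singleton.mpr (eq_one_of_mem_DSet_zero hw)
  | succ m ih =>
    rcases m with _ | m
    · exact dFinset_one ▸ mem_singleton.mpr (eq_one_of_mem_DSet_one hw)
    obtain ⟨u, hu, x, hx, rfl⟩ := exists_mul_cosetRep hw
    exact mem_dFinset_succ.mpr ⟨u, ih hu, x, hx, rfl⟩

lemma coe_dFinset (n : ℕ) : (dFinset n : Set (Equiv.Perm ℤ)) = DSet n :=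
  Set.ext fun _ => ⟨mem_DSet_of_mem_dFinset, mem_dFinset_of_mem_DSet⟩

lemma sum_dFinset_add_two (m : ℕ) :
    ∑ w ∈ dFinset (m + 2), MonoidAlgebra.of ℤ (Equiv.Perm ℤ) w =
      (∑ u ∈ dFinset (m + 1), MonoidAlgebra.of ℤ (Equiv.Perm ℤ) u) * phiD (m + 2) := by
  have hinj : Set.InjOn (fun p : Equiv.Perm ℤ × ℤ => p.1 * cosetRep (m + 2) p.2)
      (dFinset (m + 1) ×ˢ signedLetters (m + 2) : Finset _) := by
    rintro ⟨u, x⟩ hux ⟨v, y⟩ hvy (h : u * cosetRep (m + 2) x = v * cosetRep (m + 2) y)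
    obtain ⟨hu, hx⟩ := mem_product.mp hux
    obtain ⟨hv, hy⟩ := mem_product.mp hvy
    replace hu := (mem_DSet_of_mem_dFinset hu).1.apply_natCast_succ
    replace hv := (mem_DSet_of_mem_dFinset hv).1.apply_natCast_succ
    dsimp only at hu hv hx hy
    have hxy : x = y := by
      rw [← inv_mul_cosetRep_apply (by omega) hx hu, h, inv_mul_cosetRep_apply (by omega) hy hv]
    subst hxy
    rw [mul_right_cancel h]
  rw [phiD_eq_sum_cosetRep (by omega), sum_mul_sum, ← sum_product', dFinset, sum_image hinj]
  simp only [map_mul]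

end dFinset

lemma prod_phiD_eq_sum_dFinset (m : ℕ) :
    ((List.range m).map fun j => phiD (j + 2)).prod =
      ∑ w ∈ dFinset (m + 1), MonoidAlgebra.of ℤ (Equiv.Perm ℤ) w := by
  induction m with
  | zero => rw [dFinset_one, sum_singleton, map_one, List.range_zero, List.map_nil, List.prod_nil]
  | succ m ih =>
    rw [List.range_succ, List.map_append, List.prod_append, ih, sum_dFinset_add_two,
      List.map_singleton, List.prod_singleton]

theorem phi_factorization_D_general (n : ℕ) :
    ((List.range (n - 1)).map fun j => phiD (j + 2)).prod =
      ∑ᶠ w ∈ DSet n, MonoidAlgebra.of ℤ (Equiv.Perm ℤ) w := by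
  have hD : dFinset (n - 1 + 1) = dFinset n := by
    rcases n with _ | n
    · exact dFinset_one
    · rfl
  rw [← coe_dFinset, finsum_mem_coe_finset, prod_phiD_eq_sum_dFinset, hD]

/-- In `ℤ[D_n]` (`n ≥ 4`), `Φ_2 Φ_3 ⋯ Φ_n` equals the sum of all elements of `D_n`. -/
theorem phi_factorization_D (n : ℕ) (hn : 4 ≤ n) :
    ((List.range (n - 1)).map fun j => phiD (j + 2)).prod =
      ∑ᶠ w ∈ DSet n, MonoidAlgebra.of ℤ (Equiv.Perm ℤ) w :=
  phi_factorization_D_general n
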